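/- For each fixed m and each k ≥ 1, lim_{n→∞} μ_{n,m}(k,0) = (1/2) f_{γ_m}(k), where γ_m = 2(1 - √(1 - 1/(2m))) and f_γ is the Sibuya(γ) probability mass function. -/

import Mathlib

/-- `μ` together with eigenvalue `l` is the (unique) quasi-stationary distribution of the
2-opinion voter model on the complete bipartite graph `K_{n,m}`, tracked by the pair
`(k,h)` of 'yes' counts in the parts of sizes `n` and `m`.  `μ` is extended by `0` outside
the grid `{0,…,n}×{0,…,m}`; the absorbing states `(0,0),(n,m)` and the unreachable states
`(0,m),(n,0)` carry zero mass; `μ` is a probability vector satisfying the left-eigenvector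
equation with eigenvalue `l`, and is invariant under relabeling of the two opinions. -/
structure IsBipartiteVoterQSD (n m : ℕ) (μ : ℤ → ℤ → ℝ) (l : ℝ) : Prop where
  nonneg : ∀ k h : ℤ, 0 ≤ μ k h
  zero_outside : ∀ k h : ℤ, (k < 0 ∨ (n : ℤ) < k ∨ h < 0 ∨ (m : ℤ) < h) → μ k h = 0
  zero_corner₁ : μ 0 0 = 0
  zero_corner₂ : μ n m = 0
  zero_bp₁ : μ 0 m = 0
  zero_bp₂ : μ n 0 = 0
  sum_one : ∑ k ∈ Finset.Icc (0 : ℤ) n, ∑ h ∈ Finset.Icc (0 : ℤ) m, μ k h = 1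
  symm : ∀ k h : ℤ, μ k h = μ (n - k) (m - h)
  eigen : ∀ k h : ℤ, 0 ≤ k → k ≤ n → 0 ≤ h → h ≤ m →
    ¬(k = 0 ∧ h = 0) → ¬(k = n ∧ h = m) →
    l * μ k h
      = μ k h * (((k : ℝ) * h + ((n : ℝ) - k) * ((m : ℝ) - h)) / ((n : ℝ) * m))
        + μ (k - 1) h * ((((n : ℝ) - k + 1) * h) / ((m : ℝ) * ((n : ℝ) + m)))
        + μ (k + 1) h * ((((k : ℝ) + 1) * ((m : ℝ) - h)) / ((m : ℝ) * ((n : ℝ) + m)))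
        + μ k (h - 1) * ((((m : ℝ) - h + 1) * k) / ((n : ℝ) * ((n : ℝ) + m)))
        + μ k (h + 1) * ((((h : ℝ) + 1) * ((n : ℝ) - k)) / ((n : ℝ) * ((n : ℝ) + m)))


/-- The Sibuya probability mass function: `f_γ(k) = (γ/k!) ∏_{j=1}^{k-1} (j-γ)`. -/
noncomputable def sibuya (γ : ℝ) (k : ℕ) : ℝ :=
  γ / (Nat.factorial k) * ∏ j ∈ Finset.Icc 1 (k - 1), ((j : ℝ) - γ)

/-!
The eigenvalue equation at a boundary state `(k, 0)` expresses `μ_{n,m}(k+1, 0)` through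
`μ_{n,m}(k, 0)` and `μ_{n,m}(k, 1)`.  As `n → ∞` the coefficient of `μ_{n,m}(k, 0)` tends to
`(k - γ_m)/(k + 1)`, since the eigenvalue is `1 - γ_{n,m}/(n + m)` with `γ_{n,m} → γ_m`, while
the coefficient of `μ_{n,m}(k, 1)` stays bounded and `μ_{n,m}(k, 1) → 0`.  So the limits obey
the Sibuya recursion `f(k+1) = (k - γ)/(k + 1) f(k)`, started from `γ_m/2` at `k = 1`.
-/

open Filter Topology

theorem sibuya_one (γ : ℝ) : sibuya γ 1 = γ := by
  simp [sibuya]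

theorem sibuya_succ (γ : ℝ) {k : ℕ} (hk : 1 ≤ k) :
    sibuya γ (k + 1) = (k - γ) / (k + 1) * sibuya γ k := by
  obtain ⟨j, rfl⟩ := Nat.exists_eq_add_of_le' hk
  simp only [sibuya, Nat.add_sub_cancel, Finset.prod_Icc_succ_top (Nat.le_add_left 1 j),
    Nat.factorial_succ (j + 1)]
  push_cast
  field_simp

/-- The eigenvalue equation at `(k, 0)` solved for `μ (k + 1) 0`. -/
theorem IsBipartiteVoterQSD.succ_zero_eq {n m : ℕ} {μ : ℤ → ℤ → ℝ} {l : ℝ}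
    (H : IsBipartiteVoterQSD n m μ l) (hm : 0 < m) {k : ℕ} (hk : 1 ≤ k) (hkn : k + 1 ≤ n) :
    μ (k + 1 : ℕ) 0 = (n + m) / (k + 1) * (l - (n - k) / n) * μ k 0
      - μ k 1 * ((n - k) / (n * (k + 1))) := by
  have E := H.eigen k 0 (by positivity) (by omega) le_rfl (by positivity) (by omega) (by omega)
  rw [H.zero_outside k (0 - 1) (by omega)] at E
  have hn : (0 : ℝ) < n := by exact_mod_cast (show 0 < n by omega)
  have hm₀ : (0 : ℝ) < m := by exact_mod_cast hm
  push_cast at E ⊢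
  simp only [mul_zero, zero_mul, sub_zero, zero_div, add_zero, zero_add, one_mul] at E
  field_simp at E ⊢
  linear_combination -E

theorem tendsto_two_mul_one_sub_sqrt (c : ℝ) :
    Tendsto (fun n : ℕ => 2 * (1 - √(1 - 1 / (2 * (n : ℝ)) - c))) atTop
      (𝓝 (2 * (1 - √(1 - c)))) := by
  have h : Tendsto (fun n : ℕ => 1 / (2 * (n : ℝ))) atTop (𝓝 0) := by
    simp only [one_div]
    exact (tendsto_natCast_atTop_atTop.const_mul_atTop two_pos).inv_tendsto_atTop
  simpa using (((h.const_sub 1).sub_const c).sqrt.const_sub 1).const_mul 2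

theorem tendsto_eigen_coeff (m k : ℝ) {γn : ℕ → ℝ} {γ : ℝ} (hγ : Tendsto γn atTop (𝓝 γ)) :
    Tendsto (fun n : ℕ => (n + m) / (k + 1) * (1 - γn n / (n + m) - (n - k) / n)) atTop
      (𝓝 ((k - γ) / (k + 1))) := by
  have hlim : Tendsto (fun n : ℕ => (k * (1 + m / n) - γn n) / (k + 1)) atTop
      (𝓝 ((k * (1 + 0) - γ) / (k + 1))) :=
    ((((tendsto_const_div_atTop_nhds_zero_nat m).const_add 1).const_mul k).sub hγ).div_const _
  rw [add_zero, mul_one] at hlim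
  refine hlim.congr' ?_
  filter_upwards [eventually_gt_atTop 0,
    tendsto_natCast_atTop_atTop.eventually (eventually_gt_atTop (-m))] with n hn hnm
  have hn : (n : ℝ) ≠ 0 := by positivity
  have hnm : (n : ℝ) + m ≠ 0 := by linarith
  field_simp
  ring

theorem tendsto_succ_zero_of_qsd {m : ℕ} (hm : 0 < m) {μ : ℕ → ℤ → ℤ → ℝ} {γn : ℕ → ℝ}
    {γ L : ℝ} (hμ : ∀ᶠ n in atTop, IsBipartiteVoterQSD n m (μ n) (1 - γn n / (n + m)))
    (hγ : Tendsto γn atTop (𝓝 γ)) {k : ℕ} (hk : 1 ≤ k)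
    (hk1 : Tendsto (fun n => μ n k 1) atTop (𝓝 0))
    (hk0 : Tendsto (fun n => μ n k 0) atTop (𝓝 L)) :
    Tendsto (fun n => μ n (k + 1 : ℕ) 0) atTop (𝓝 ((k - γ) / (k + 1) * L)) := by
  have hweight : Tendsto (fun n : ℕ => ((n : ℝ) - k) / (n * (k + 1))) atTop
      (𝓝 ((1 - 0) / (k + 1))) := by
    refine (((tendsto_const_div_atTop_nhds_zero_nat (k : ℝ)).const_sub 1).div_const _).congr' ?_
    filter_upwards [eventually_gt_atTop 0] with n hn
    have hn : (n : ℝ) ≠ 0 := by positivity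
    field_simp
  have hlim := ((tendsto_eigen_coeff m k hγ).mul hk0).sub (hk1.mul hweight)
  rw [zero_mul, sub_zero] at hlim
  refine hlim.congr' ?_
  filter_upwards [hμ, eventually_ge_atTop (k + 1)] with n hQSD hkn
  exact (hQSD.succ_zero_eq hm hk hkn).symm

theorem bipartite_qsd_limit_sibuya (m : ℕ) (hm : 1 ≤ m)
    (μ : ℕ → ℤ → ℤ → ℝ)
    (hμ : ∀ n : ℕ, m ≤ n → 3 ≤ n → IsBipartiteVoterQSD n m (μ n)
      (1 - (2 * (1 - Real.sqrt (1 - 1 / (2 * (n : ℝ)) - 1 / (2 * (m : ℝ)))))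
        / ((n : ℝ) + m)))
    (hvanish : ∀ k h : ℤ, 0 ≤ k → 0 < h → h ≤ (m : ℤ) →
      Filter.Tendsto (fun n : ℕ => μ n k h) Filter.atTop (nhds 0))
    (hone : Filter.Tendsto (fun n : ℕ => μ n 1 0) Filter.atTop
      (nhds ((2 * (1 - Real.sqrt (1 - 1 / (2 * (m : ℝ))))) / 2))) :
    ∀ k : ℕ, 1 ≤ k →
      Filter.Tendsto (fun n : ℕ => μ n (k : ℤ) 0) Filter.atTop
        (nhds ((1 / 2) * sibuya (2 * (1 - Real.sqrt (1 - 1 / (2 * (m : ℝ))))) k)) := by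
  intro k hk
  induction k, hk using Nat.le_induction with
  | base => simpa [sibuya_one, div_eq_inv_mul] using hone
  | succ k hk ih =>
    have hQSD : ∀ᶠ n in atTop, IsBipartiteVoterQSD n m (μ n)
        (1 - 2 * (1 - √(1 - 1 / (2 * (n : ℝ)) - 1 / (2 * (m : ℝ)))) / (n + m)) :=
      eventually_atTop.2 ⟨max m 3, fun n hn => hμ n (le_of_max_le_left hn) (le_of_max_le_right hn)⟩
    have hstep := tendsto_succ_zero_of_qsd hm hQSD (tendsto_two_mul_one_sub_sqrt _) hk
      (hvanish k 1 (Int.natCast_nonneg k) one_pos (by exact_mod_cast hm)) ih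
    rwa [sibuya_succ _ hk, mul_left_comm]
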